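/- Let 0 → U → V → W → 0 be a short exact sequence of finite-dimensional K-vector spaces. For each l ≥ 0 and 0 ≤ i ≤ l, let F_i ⊆ Λ^l V be the image of U^{⊗i} ⊗ V^{⊗(l−i)} under the canonical projection V^{⊗l} → Λ^l V (via the inclusion U ⊆ V). Then F_{l+1} = 0 ⊆ F_l ⊆ ... ⊆ F_0 = Λ^l V is a filtration with F_i/F_{i+1} ≅ Λ^i U ⊗ Λ^{l−i} W. -/

import Mathlib

open ExteriorAlgebra

variable {K V : Type*} [Field K] [AddCommGroup V] [Module K V]

/-- The `i`-th step of the filtration of `Λ^l V` induced by a subspace `U ⊆ V`: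
the image of `U^{⊗i} ⊗ V^{⊗(l-i)}` in `Λ^l V`, i.e. the span of the wedges
`u₁∧...∧uᵢ∧v_{i+1}∧...∧v_l` with `u_j ∈ U`, `v_j ∈ V` (and `0` for `i > l`). -/
noncomputable def exteriorFiltration (U : Submodule K V) (l i : ℕ) :
    Submodule K (ExteriorAlgebra K V) :=
  if i ≤ l then
    Submodule.span K
      {w | ∃ u : Fin l → V, (∀ j : Fin l, (j : ℕ) < i → u j ∈ U) ∧
        w = ExteriorAlgebra.ιMulti K l u}
  else ⊥

/-!
Choose a basis `b` of `V` indexed by a finite linear order in which the indices `A` of a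
basis of `U` come first. Then `F_i` is spanned by the basis wedges `e_S` (`#S = l`) with
`i ≤ #(S ∩ A)`: a generator `u₁∧...∧u_l` expands into wedges of basis vectors whose first
`i` indices lie in `A`, and conversely the increasing enumeration of `S` lists `S ∩ A` first.
Hence `dim F_i/F_{i+1}` counts the `S` with `#(S ∩ A) = i`, which is
`C(dim U, i) * C(dim W, l - i) = dim (Λ^i U ⊗ Λ^{l-i} W)`.
-/

open Finset Module

theorem Finset.card_filter_card_inter_powersetCard {α : Type*} [DecidableEq α]
    (s A : Finset α) {i l : ℕ} (hil : i ≤ l) :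
    #{S ∈ s.powersetCard l | #(S ∩ A) = i} =
      (#(s ∩ A)).choose i * (#(s \ A)).choose (l - i) := by
  rw [← card_powersetCard, ← card_powersetCard, ← card_product]
  refine card_nbij' (fun S => (S ∩ A, S \ A)) (fun p => p.1 ∪ p.2) ?_ ?_ ?_ ?_
  · intro S hS
    simp only [coe_filter, mem_powersetCard, Set.mem_ofPred_eq, coe_product, Set.mem_prod,
      mem_coe] at hS ⊢
    have := card_inter_add_card_sdiff S A
    exact ⟨⟨inter_subset_inter_right hS.1.1, hS.2⟩, sdiff_subset_sdiff hS.1.1 le_rfl,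
      by omega⟩
  · rintro ⟨T, R⟩ h
    simp only [coe_filter, mem_powersetCard, Set.mem_ofPred_eq, coe_product, Set.mem_prod,
      mem_coe] at h ⊢
    obtain ⟨⟨hTs, hT⟩, hRs, hR⟩ := h
    have hTA : T ⊆ A := (subset_inter_iff.1 hTs).2
    have hRA : Disjoint R A := disjoint_of_subset_left hRs sdiff_disjoint
    refine ⟨⟨union_subset (subset_inter_iff.1 hTs).1 (hRs.trans sdiff_subset), ?_⟩, ?_⟩
    · rw [card_union_of_disjoint (disjoint_of_subset_left hTA hRA.symm)]; omega
    · rw [union_inter_distrib_right, inter_eq_left.2 hTA, disjoint_iff_inter_eq_empty.1 hRA,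
        union_empty, hT]
  · intro S _
    grind
  · rintro ⟨T, R⟩ h
    simp only [coe_product, Set.mem_prod, mem_coe, mem_powersetCard, subset_iff, mem_inter,
      mem_sdiff] at h
    refine Prod.ext ?_ ?_ <;> ext x <;> simp only [mem_inter, mem_sdiff, mem_union] <;> grind

theorem Finset.orderEmbOfFin_mem_of_lt_card_inter {ι : Type*} [LinearOrder ι] {S A : Finset ι}
    (hA : IsLowerSet (A : Set ι)) {l : ℕ} (h : #S = l) {j : Fin l}
    (hj : (j : ℕ) < #(S ∩ A)) :
    S.orderEmbOfFin h j ∈ A := by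
  set f := S.orderEmbOfFin h
  by_contra hjA
  have hsub : S ∩ A ⊆ (Iio j).map f.toEmbedding := by
    intro y hy
    obtain ⟨hyS, hyA⟩ := mem_inter.1 hy
    obtain ⟨k, rfl⟩ : y ∈ Set.range f := by rwa [range_orderEmbOfFin]
    have : f k < f j := lt_of_not_ge fun hle => hjA (hA hle hyA)
    exact mem_map_of_mem _ (mem_Iio.2 (f.lt_iff_lt.1 this))
  have := (card_le_card hsub).trans_eq (by rw [card_map, Fin.card_Iio])
  omega

theorem ExteriorAlgebra.ιMulti_comp_mem_span_ιMulti_family {ι : Type*} [LinearOrder ι]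
    (v : ι → V) {l : ℕ} {r : Fin l → ι} (hr : Function.Injective r) :
    ιMulti K l (v ∘ r) ∈ K ∙ ιMulti_family K l v
      (Set.powersetCard.ofCard ((card_image_of_injective univ hr).trans (card_fin l))) := by
  set f := Set.powersetCard.ofFinEmbEquiv.symm
    (Set.powersetCard.ofCard ((card_image_of_injective univ hr).trans (card_fin l)))
  have hrange : Set.range r = Set.range f := by
    ext x
    rw [Set.powersetCard.mem_range_ofFinEmbEquiv_symm_iff_mem]
    simp [← Set.powersetCard.mem_coe_iff]
  set σ : Equiv.Perm (Fin l) := (Equiv.ofInjective r hr).trans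
    ((Equiv.setCongr hrange).trans (Equiv.ofInjective f f.injective).symm)
  have hσ : f ∘ σ = r := funext fun j => by simp [σ, Equiv.apply_ofInjective_symm]
  have := (ιMulti K l).map_perm (v ∘ f) σ
  rw [Function.comp_assoc, hσ] at this
  rw [this]
  exact Submodule.smul_of_tower_mem _ _ (Submodule.mem_span_singleton_self _)

theorem ExteriorAlgebra.ιMulti_eq_sum_basis {ι : Type*} [Fintype ι] (b : Basis ι K V) {l : ℕ}
    (u : Fin l → V) :
    ιMulti K l u =
      ∑ r : Fin l → ι, (∏ j, b.repr (u j) (r j)) • ιMulti K l (b ∘ r) := by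
  conv_lhs => rw [show u = fun j => ∑ k, b.repr (u j) k • b k from
    funext fun j => (b.sum_repr _).symm]
  have := (ιMulti K l).toMultilinearMap.map_sum fun j k => b.repr (u j) k • b k
  simp only [AlternatingMap.coe_multilinearMap, MultilinearMap.map_smul_univ] at this
  exact this

theorem Submodule.finrank_quotient_comap_subtype_add_finrank {M : Type*} [AddCommGroup M]
    [Module K M] {p q : Submodule K M} [FiniteDimensional K q] (h : p ≤ q) :
    finrank K (q ⧸ p.comap q.subtype) + finrank K p = finrank K q := by
  rw [← (Submodule.comapSubtypeEquivOfLe h).finrank_eq, Submodule.finrank_quotient_add_finrank]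

theorem Submodule.exists_basis_isLowerSet_span_eq [FiniteDimensional K V] (U : Submodule K V) :
    ∃ (ι : Type) (_ : LinearOrder ι) (_ : Fintype ι) (b : Basis ι K V) (A : Finset ι),
      IsLowerSet (A : Set ι) ∧ U = span K (b '' A) ∧
      #A = finrank K U ∧ #Aᶜ = finrank K (V ⧸ U) := by
  let b := ((finBasis K U).sumQuot (finBasis K (V ⧸ U))).reindex toLex
  let inlₗ : Fin (finrank K U) ↪ Fin (finrank K U) ⊕ₗ Fin (finrank K (V ⧸ U)) :=
    ⟨fun a => toLex (Sum.inl a), fun _ _ h => Sum.inl_injective (toLex.injective h)⟩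
  refine ⟨_, inferInstance, inferInstance, b, univ.map inlₗ, ?_, ?_, ?_, ?_⟩
  · intro y x hle hy
    obtain ⟨a, -, rfl⟩ := Finset.mem_map.1 (mem_coe.1 hy)
    rw [mem_coe]
    induction x with
    | h x => cases x with
      | inl c => exact Finset.mem_map_of_mem inlₗ (mem_univ c)
      | inr c => exact absurd hle Sum.Lex.not_inr_le_inl
  · have : b '' (univ.map inlₗ : Finset _) = U.subtype '' Set.range (finBasis K U) := by
      rw [coe_map, coe_univ, Set.image_univ, ← Set.range_comp, ← Set.range_comp]
      congr 1
      funext a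
      simp only [Function.comp_apply, b, Basis.reindex_apply]
      exact Basis.sumQuot_inl (finBasis K U) (finBasis K (V ⧸ U)) a
    rw [this, ← Submodule.map_span, (finBasis K U).span_eq, Submodule.map_top,
      Submodule.range_subtype]
  · simp
  · rw [card_compl, card_map, card_univ, Fintype.card_lex, Fintype.card_sum]
    simp

theorem exteriorFiltration_zero (U : Submodule K V) (l : ℕ) :
    exteriorFiltration U l 0 = ⋀[K]^l V := by
  rw [exteriorFiltration, if_pos (Nat.zero_le l), ← ιMulti_span_fixedDegree K l]
  congr 1
  ext w
  exact ⟨fun ⟨u, _, hw⟩ => ⟨u, hw.symm⟩,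
    fun ⟨u, hw⟩ => ⟨u, fun _ h => absurd h (Nat.not_lt_zero _), hw.symm⟩⟩

theorem exteriorFiltration_of_lt (U : Submodule K V) {l i : ℕ} (h : l < i) :
    exteriorFiltration U l i = ⊥ :=
  if_neg (Nat.not_le.2 h)

theorem exteriorFiltration_succ_le (U : Submodule K V) (l i : ℕ) :
    exteriorFiltration U l (i + 1) ≤ exteriorFiltration U l i := by
  unfold exteriorFiltration
  split_ifs with h h'
  · exact Submodule.span_mono fun _ ⟨u, hu, hw⟩ => ⟨u, fun j hj => hu j (by omega), hw⟩
  · omega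
  all_goals exact bot_le

theorem exteriorFiltration_le_exteriorPower (U : Submodule K V) (l i : ℕ) :
    exteriorFiltration U l i ≤ ⋀[K]^l V :=
  exteriorFiltration_zero U l ▸ antitone_nat_of_succ_le (exteriorFiltration_succ_le U l) i.zero_le

section AdaptedBasis

variable {ι : Type*} [LinearOrder ι] (b : Basis ι K V) {A : Finset ι} {U : Submodule K V}

theorem basis_mem_exteriorFiltration (hA : IsLowerSet (A : Set ι))
    (hU : U = Submodule.span K (b '' A)) {l i : ℕ} {S : Finset ι} (hSl : #S = l)
    (hSi : i ≤ #(S ∩ A)) :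
    b.ExteriorAlgebra S ∈ exteriorFiltration U l i := by
  have hil : i ≤ l := hSi.trans ((card_le_card inter_subset_left).trans_eq hSl)
  rw [exteriorFiltration, if_pos hil, basis_apply_ofCard b hSl]
  refine Submodule.subset_span ⟨b ∘ S.orderEmbOfFin hSl, fun j hj => ?_, rfl⟩
  rw [hU]
  exact Submodule.subset_span (Set.mem_image_of_mem b
    (orderEmbOfFin_mem_of_lt_card_inter hA hSl (hj.trans_le hSi)))

variable [Fintype ι]

theorem ιMulti_basis_comp_mem_span {l i : ℕ} (hil : i ≤ l) {r : Fin l → ι}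
    (hr : ∀ j : Fin l, (j : ℕ) < i → r j ∈ A) :
    ιMulti K l (b ∘ r) ∈
      Submodule.span K (b.ExteriorAlgebra '' {S ∈ univ.powersetCard l | i ≤ #(S ∩ A)}) := by
  by_cases hinj : Function.Injective r
  · have hcard : #(univ.image r) = l := (card_image_of_injective univ hinj).trans (card_fin l)
    have hi : i ≤ #(univ.image r ∩ A) := by
      simpa using card_le_card_of_injOn (s := (univ : Finset (Fin i)))
        (fun j => r (Fin.castLE hil j))
        (fun j _ => mem_inter.2 ⟨mem_image_of_mem r (mem_univ _), hr _ j.2⟩)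
        (fun j _ j' _ h => Fin.castLE_injective hil (hinj h))
    refine Submodule.span_mono ?_ (ιMulti_comp_mem_span_ιMulti_family b hinj)
    rw [Set.singleton_subset_iff, ← basis_apply_ofCard]
    exact Set.mem_image_of_mem _ (by simpa [mem_filter, mem_powersetCard] using ⟨hcard, hi⟩)
  · rw [AlternatingMap.map_eq_zero_of_not_injective _ _ fun h => hinj h.of_comp]
    exact Submodule.zero_mem _

theorem exteriorFiltration_eq_span_basis (hA : IsLowerSet (A : Set ι))
    (hU : U = Submodule.span K (b '' A)) (l i : ℕ) :
    exteriorFiltration U l i =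
      Submodule.span K (b.ExteriorAlgebra '' {S ∈ univ.powersetCard l | i ≤ #(S ∩ A)}) := by
  refine le_antisymm ?_ (Submodule.span_le.2 ?_)
  · rw [exteriorFiltration]
    split_ifs with hil
    · refine Submodule.span_le.2 ?_
      rintro _ ⟨u, hu, rfl⟩
      rw [ιMulti_eq_sum_basis b]
      refine Submodule.sum_mem _ fun r _ => ?_
      by_cases hr : ∀ j : Fin l, (j : ℕ) < i → r j ∈ A
      · exact Submodule.smul_mem _ _ (ιMulti_basis_comp_mem_span b hil hr)
      · push Not at hr
        obtain ⟨j, hj, hrj⟩ := hr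
        have hsupp : ↑(b.repr (u j)).support ⊆ (A : Set ι) := by
          rw [← b.mem_span_image, ← hU]
          exact hu j hj
        have hcoeff : b.repr (u j) (r j) = 0 :=
          Finsupp.notMem_support_iff.1 fun h => hrj (hsupp (mem_coe.2 h))
        rw [Finset.prod_eq_zero (mem_univ j) hcoeff, zero_smul]
        exact Submodule.zero_mem _
    · exact bot_le
  · rintro _ ⟨S, hS, rfl⟩
    rw [Set.mem_ofPred_eq, mem_powersetCard] at hS
    exact basis_mem_exteriorFiltration b hA hU hS.1.2 hS.2

theorem finrank_exteriorFiltration (hA : IsLowerSet (A : Set ι))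
    (hU : U = Submodule.span K (b '' A)) (l i : ℕ) :
    finrank K (exteriorFiltration U l i) = #{S ∈ univ.powersetCard l | i ≤ #(S ∩ A)} := by
  rw [exteriorFiltration_eq_span_basis b hA hU, Set.image_eq_range]
  refine (finrank_span_eq_card
    (b.ExteriorAlgebra.linearIndependent.comp _ Subtype.val_injective)).trans ?_
  rw [← Set.toFinset_card]
  congr 1
  ext
  simp

theorem finrank_exteriorFiltration_eq_add (hA : IsLowerSet (A : Set ι))
    (hU : U = Submodule.span K (b '' A)) (l i : ℕ) :
    finrank K (exteriorFiltration U l i) =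
      finrank K (exteriorFiltration U l (i + 1)) +
        #{S ∈ univ.powersetCard l | #(S ∩ A) = i} := by
  have hsplit : {S ∈ (univ : Finset ι).powersetCard l | i ≤ #(S ∩ A)} =
      {S ∈ (univ : Finset ι).powersetCard l | i + 1 ≤ #(S ∩ A)} ∪
        {S ∈ (univ : Finset ι).powersetCard l | #(S ∩ A) = i} := by
    ext S
    simp only [mem_filter, mem_union, ← and_or_left]
    exact and_congr_right fun _ => by omega
  rw [finrank_exteriorFiltration b hA hU, finrank_exteriorFiltration b hA hU, hsplit,
    card_union_of_disjoint (disjoint_filter.2 fun _ _ h h' => by omega)]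

end AdaptedBasis

/-- for a short exact sequence `0 → U → V → W → 0` of
finite-dimensional `K`-vector spaces, the subspaces `F_i ⊆ Λ^l V` form a
filtration `0 = F_{l+1} ⊆ F_l ⊆ ... ⊆ F_0 = Λ^l V` with
`F_i/F_{i+1} ≅ Λ^i U ⊗ Λ^{l-i} W`. -/
theorem exteriorFiltration_spec [FiniteDimensional K V] (U : Submodule K V) (l : ℕ) :
    exteriorFiltration U l 0 = ⋀[K]^l V ∧
    exteriorFiltration U l (l + 1) = ⊥ ∧
    (∀ i : ℕ, exteriorFiltration U l (i + 1) ≤ exteriorFiltration U l i) ∧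
    (∀ i : ℕ, i ≤ l →
      Nonempty
        ((↥(exteriorFiltration U l i) ⧸
            Submodule.comap (exteriorFiltration U l i).subtype
              (exteriorFiltration U l (i + 1))) ≃ₗ[K]
          TensorProduct K (↥(⋀[K]^i ↥U)) (↥(⋀[K]^(l - i) (V ⧸ U))))) := by
  refine ⟨exteriorFiltration_zero U l, exteriorFiltration_of_lt U l.lt_succ_self,
    exteriorFiltration_succ_le U l, fun i hil => ?_⟩
  obtain ⟨ι, _, _, b, A, hA, hU, hAU, hAW⟩ := U.exists_basis_isLowerSet_span_eq
  have : FiniteDimensional K (exteriorFiltration U l i) :=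
    Submodule.finiteDimensional_of_le (exteriorFiltration_le_exteriorPower U l i)
  have hquot := Submodule.finrank_quotient_comap_subtype_add_finrank
    (exteriorFiltration_succ_le U l i)
  have hcount := card_filter_card_inter_powersetCard univ A hil
  rw [univ_inter, ← compl_eq_univ_sdiff, hAU, hAW] at hcount
  rw [finrank_exteriorFiltration_eq_add b hA hU l i, hcount] at hquot
  apply FiniteDimensional.nonempty_linearEquiv_of_finrank_eq
  rw [finrank_tensorProduct, exteriorPower.finrank_eq, exteriorPower.finrank_eq]
  omega
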